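/- arXiv:1911.07484 — 2 statements merged into one kernel-verified Lean document; each statement's English description precedes it below -/
import Mathlib

section
/- If p, q are points in ℝ^d, x and y are points of a finite set X ⊆ ℝ^d with q in the Voronoi cell of x (i.e., dist(q,x) ≤ dist(q,z) for all z ∈ X), and some point γ(s) = (1-s)p + sq with s ∈ [0,1) lies in the Voronoi cell of y, and dist(x,p) < t, then dist(y,p) < t. -/
open RealInnerProductSpace

/-
The function `z ↦ dist z x ^ 2 - dist z y ^ 2` is affine, nonpositive at `q` and nonnegative at
`γ(s) = (1 - s) • p + s • q`. Along the segment it is a convex combination of its values at `p`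
and `q`, so with `1 - s > 0` it is nonnegative at `p` too: `p` is at least as close to `y` as
to `x`.
-/

section BisectorCrossing

variable {E : Type*} [NormedAddCommGroup E] [InnerProductSpace ℝ E]

theorem dist_sq_sub_dist_sq_eq_inner (x y z : E) :
    dist z x ^ 2 - dist z y ^ 2 = 2 * ⟪z, y - x⟫ + (‖x‖ ^ 2 - ‖y‖ ^ 2) := by
  rw [dist_eq_norm, dist_eq_norm, norm_sub_sq_real, norm_sub_sq_real, inner_sub_right]
  ring

theorem dist_sq_sub_dist_sq_convexCombo (x y p q : E) (s : ℝ) :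
    dist ((1 - s) • p + s • q) x ^ 2 - dist ((1 - s) • p + s • q) y ^ 2 =
      (1 - s) * (dist p x ^ 2 - dist p y ^ 2) + s * (dist q x ^ 2 - dist q y ^ 2) := by
  simp only [dist_sq_sub_dist_sq_eq_inner, inner_add_left, real_inner_smul_left]
  ring

theorem dist_le_dist_of_closer_on_segment {x y p q : E} {s : ℝ} (hs : s ∈ Set.Ico (0 : ℝ) 1)
    (hq : dist x q ≤ dist y q)
    (hγ : dist y ((1 - s) • p + s • q) ≤ dist x ((1 - s) • p + s • q)) :
    dist y p ≤ dist x p := by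
  obtain ⟨hs0, hs1⟩ := hs
  have gap_q : dist q x ^ 2 - dist q y ^ 2 ≤ 0 := by
    rw [dist_comm q x, dist_comm q y, sub_nonpos]
    exact pow_le_pow_left₀ dist_nonneg hq 2
  have gap_γ : 0 ≤ dist ((1 - s) • p + s • q) x ^ 2 - dist ((1 - s) • p + s • q) y ^ 2 := by
    rw [dist_comm _ x, dist_comm _ y, sub_nonneg]
    exact pow_le_pow_left₀ dist_nonneg hγ 2
  rw [dist_sq_sub_dist_sq_convexCombo] at gap_γ
  have gap_p : 0 ≤ dist p x ^ 2 - dist p y ^ 2 := by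
    by_contra! h
    linarith [mul_nonpos_of_nonneg_of_nonpos hs0 gap_q, mul_neg_of_pos_of_neg (sub_pos.2 hs1) h]
  rw [dist_comm y p, dist_comm x p, ← sq_le_sq₀ dist_nonneg dist_nonneg]
  linarith

end BisectorCrossing

/-- If `q` lies in the Voronoi cell of `x` and some point `(1-s)•p + s•q` with
`s ∈ [0,1)` lies in the Voronoi cell of `y`, and `dist x p < t`, then `dist y p < t`. -/
theorem stmt_0 {d : ℕ} (X : Finset (EuclideanSpace ℝ (Fin d)))
    (x y p q : EuclideanSpace ℝ (Fin d)) (t : ℝ)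
    (hx : x ∈ X) (hy : y ∈ X)
    (hq : ∀ z ∈ X, dist x q ≤ dist z q)
    (s : ℝ) (hs : s ∈ Set.Ico (0 : ℝ) 1)
    (hγ : ∀ z ∈ X, dist y ((1 - s) • p + s • q) ≤ dist z ((1 - s) • p + s • q))
    (hp : dist x p < t) :
    dist y p < t :=
  (dist_le_dist_of_closer_on_segment hs (hq y hy) (hγ x hx)).trans_lt hp
end

section
/- Let X ⊆ ℝ^d be finite and t > 0. Define T = {(p,q) ∈ ℝ^d × ℝ^d : ∃ x ∈ X, dist(x,p) < t and q ∈ Vor(X,x)}. Then for every (p,q) ∈ T and every s ∈ [0,1], the point (p, (1-s)p + sq) belongs to T. -/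
/-!
For fixed sites `x` and `y`, the difference `dist y z ^ 2 - dist x z ^ 2` is an affine function
of `z`, so the set of points at least as close to `y` as to `x` is a half-space. If `q` lies in the
Voronoi cell of `x` and `x'` is a site nearest to `m = (1 - s) • p + s • q` with `s < 1`, then
`m` lies in the half-space of `x'` while `q` does not lie strictly inside it, so `p` lies in it too:
`dist x' p ≤ dist x p < t`. For `s = 1` the site `x` itself works.
-/

open scoped RealInnerProductSpace

section

variable {E : Type*} [NormedAddCommGroup E] [InnerProductSpace ℝ E]

lemma dist_sq_sub_dist_sq (x y z : E) :
    dist y z ^ 2 - dist x z ^ 2 = ‖y‖ ^ 2 - ‖x‖ ^ 2 - 2 * ⟪y - x, z⟫ := by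
  rw [dist_eq_norm, dist_eq_norm, norm_sub_sq_real, norm_sub_sq_real, inner_sub_left]
  ring

lemma dist_sq_sub_dist_sq_convex_combination (x y p q : E) (s : ℝ) :
    dist y ((1 - s) • p + s • q) ^ 2 - dist x ((1 - s) • p + s • q) ^ 2 =
      (1 - s) * (dist y p ^ 2 - dist x p ^ 2) + s * (dist y q ^ 2 - dist x q ^ 2) := by
  simp only [dist_sq_sub_dist_sq, inner_add_right, real_inner_smul_right]
  ring

lemma dist_le_dist_of_dist_le_dist_convex_combination {x y p q : E} {s : ℝ}
    (hs₀ : 0 ≤ s) (hs₁ : s < 1) (hq : dist x q ≤ dist y q)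
    (hm : dist y ((1 - s) • p + s • q) ≤ dist x ((1 - s) • p + s • q)) :
    dist y p ≤ dist x p := by
  have hq' : dist x q ^ 2 ≤ dist y q ^ 2 := by gcongr
  have hm' : dist y ((1 - s) • p + s • q) ^ 2 ≤ dist x ((1 - s) • p + s • q) ^ 2 := by gcongr
  have hcomb := dist_sq_sub_dist_sq_convex_combination x y p q s
  have hp : dist y p ^ 2 ≤ dist x p ^ 2 := by nlinarith
  exact (pow_le_pow_iff_left₀ dist_nonneg dist_nonneg two_ne_zero).1 hp

end

theorem stmt_16_general {d : ℕ} (X : Finset (EuclideanSpace ℝ (Fin d))) (t : ℝ)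
    (T : Set (EuclideanSpace ℝ (Fin d) × EuclideanSpace ℝ (Fin d)))
    (hT : T = {pq | ∃ x ∈ X, dist x pq.1 < t ∧ ∀ y ∈ X, dist x pq.2 ≤ dist y pq.2}) :
    ∀ pq ∈ T, ∀ s ∈ Set.Icc (0 : ℝ) 1, (pq.1, (1 - s) • pq.1 + s • pq.2) ∈ T := by
  subst hT
  rintro ⟨p, q⟩ ⟨x, hxX, hxp, hvor⟩ s ⟨hs₀, hs₁⟩
  rcases hs₁.eq_or_lt with rfl | hs₁
  · exact ⟨x, hxX, hxp, by simpa using hvor⟩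
  · obtain ⟨x', hx'X, hx'min⟩ :=
      X.exists_min_image (fun y => dist y ((1 - s) • p + s • q)) ⟨x, hxX⟩
    exact ⟨x', hx'X,
      (dist_le_dist_of_dist_le_dist_convex_combination hs₀ hs₁ (hvor x' hx'X)
        (hx'min x hxX)).trans_lt hxp, hx'min⟩

/-- Line segment lemma: the `t`-thickening of the Delaunay–Čech dissimilarity is
star-shaped along the second coordinate toward the diagonal. -/
theorem stmt_16 {d : ℕ} (X : Finset (EuclideanSpace ℝ (Fin d))) (t : ℝ) (ht : 0 < t)
    (T : Set (EuclideanSpace ℝ (Fin d) × EuclideanSpace ℝ (Fin d)))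
    (hT : T = {pq | ∃ x ∈ X, dist x pq.1 < t ∧ ∀ y ∈ X, dist x pq.2 ≤ dist y pq.2}) :
    ∀ pq ∈ T, ∀ s ∈ Set.Icc (0 : ℝ) 1, (pq.1, (1 - s) • pq.1 + s • pq.2) ∈ T :=
  stmt_16_general X t T hT
end
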